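/- For every n ≥ 1 and every λ ∈ k, the representation M_n(λ) of the quiver Q̃ is indecomposable; moreover every endomorphism of M_n(λ) is of the form (f, f, f⊕f, f, f) for a single n×n matrix f commuting with J_n(λ), and M_n(λ) ≅ M_m(μ) if and only if n = m and λ = μ. (This is the continuous one-parameter series of representations of the quiver of type D̃ used in the reduction for skew-gentle algebras.) -/

import Mathlib

variable (k : Type) [Field k]

/-- A finite-dimensional representation of the quiver `Q̃` with vertices `1,…,5`
and arrows `a : 1 → 3`, `b : 2 → 3`, `c : 3 → 4`, `d : 3 → 5`. -/
structure Q5Rep where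
  V1 : Type
  V2 : Type
  V3 : Type
  V4 : Type
  V5 : Type
  [acg1 : AddCommGroup V1]
  [acg2 : AddCommGroup V2]
  [acg3 : AddCommGroup V3]
  [acg4 : AddCommGroup V4]
  [acg5 : AddCommGroup V5]
  [mod1 : Module k V1]
  [mod2 : Module k V2]
  [mod3 : Module k V3]
  [mod4 : Module k V4]
  [mod5 : Module k V5]
  [fin1 : FiniteDimensional k V1]
  [fin2 : FiniteDimensional k V2]
  [fin3 : FiniteDimensional k V3]
  [fin4 : FiniteDimensional k V4]
  [fin5 : FiniteDimensional k V5]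
  ma : V1 →ₗ[k] V3
  mb : V2 →ₗ[k] V3
  mc : V3 →ₗ[k] V4
  md : V3 →ₗ[k] V5

attribute [instance] Q5Rep.acg1 Q5Rep.acg2 Q5Rep.acg3 Q5Rep.acg4 Q5Rep.acg5
  Q5Rep.mod1 Q5Rep.mod2 Q5Rep.mod3 Q5Rep.mod4 Q5Rep.mod5
  Q5Rep.fin1 Q5Rep.fin2 Q5Rep.fin3 Q5Rep.fin4 Q5Rep.fin5

variable {k}

/-- Morphisms of representations of `Q̃`. -/
@[ext]
structure Q5Hom (M N : Q5Rep k) where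
  f1 : M.V1 →ₗ[k] N.V1
  f2 : M.V2 →ₗ[k] N.V2
  f3 : M.V3 →ₗ[k] N.V3
  f4 : M.V4 →ₗ[k] N.V4
  f5 : M.V5 →ₗ[k] N.V5
  comm_a : f3 ∘ₗ M.ma = N.ma ∘ₗ f1
  comm_b : f3 ∘ₗ M.mb = N.mb ∘ₗ f2
  comm_c : f4 ∘ₗ M.mc = N.mc ∘ₗ f3
  comm_d : f5 ∘ₗ M.md = N.md ∘ₗ f3

/-- Two representations are isomorphic iff there is a morphism all of whose
components are bijective. -/
def Q5Iso (M N : Q5Rep k) : Prop :=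
  ∃ f : Q5Hom M N, Function.Bijective f.f1 ∧ Function.Bijective f.f2 ∧
    Function.Bijective f.f3 ∧ Function.Bijective f.f4 ∧ Function.Bijective f.f5

/-- The zero representation(s). -/
def Q5Rep.IsZeroRep (M : Q5Rep k) : Prop :=
  Subsingleton M.V1 ∧ Subsingleton M.V2 ∧ Subsingleton M.V3 ∧
    Subsingleton M.V4 ∧ Subsingleton M.V5

/-- Vertexwise direct sum of representations. -/
def Q5Rep.dsum (M N : Q5Rep k) : Q5Rep k where
  V1 := M.V1 × N.V1
  V2 := M.V2 × N.V2
  V3 := M.V3 × N.V3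
  V4 := M.V4 × N.V4
  V5 := M.V5 × N.V5
  ma := M.ma.prodMap N.ma
  mb := M.mb.prodMap N.mb
  mc := M.mc.prodMap N.mc
  md := M.md.prodMap N.md

/-- Direct sum of `n` copies of a representation. -/
def Q5Rep.dpow (M : Q5Rep k) (n : ℕ) : Q5Rep k where
  V1 := Fin n → M.V1
  V2 := Fin n → M.V2
  V3 := Fin n → M.V3
  V4 := Fin n → M.V4
  V5 := Fin n → M.V5
  ma := M.ma.compLeft (Fin n)
  mb := M.mb.compLeft (Fin n)
  mc := M.mc.compLeft (Fin n)
  md := M.md.compLeft (Fin n)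

/-- A representation is indecomposable if it is nonzero and not isomorphic to a
direct sum of two nonzero representations. -/
def Q5Rep.Indecomposable (M : Q5Rep k) : Prop :=
  ¬ M.IsZeroRep ∧ ∀ A B : Q5Rep k, Q5Iso M (A.dsum B) → A.IsZeroRep ∨ B.IsZeroRep

/-- `0 → A → B → C → 0` is short exact (vertexwise). -/
def Q5ShortExact {A B C : Q5Rep k} (f : Q5Hom A B) (g : Q5Hom B C) : Prop :=
  (Function.Injective f.f1 ∧ Function.Injective f.f2 ∧ Function.Injective f.f3 ∧
    Function.Injective f.f4 ∧ Function.Injective f.f5) ∧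
  (Function.Surjective g.f1 ∧ Function.Surjective g.f2 ∧ Function.Surjective g.f3 ∧
    Function.Surjective g.f4 ∧ Function.Surjective g.f5) ∧
  (LinearMap.range f.f1 = LinearMap.ker g.f1 ∧ LinearMap.range f.f2 = LinearMap.ker g.f2 ∧
    LinearMap.range f.f3 = LinearMap.ker g.f3 ∧ LinearMap.range f.f4 = LinearMap.ker g.f4 ∧
    LinearMap.range f.f5 = LinearMap.ker g.f5)

variable (k)

/-- The `n×n` Jordan block with eigenvalue `lam`, as a linear endomorphism of `kⁿ`. -/
def jordan (n : ℕ) (lam : k) : (Fin n → k) →ₗ[k] (Fin n → k) :=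
  Matrix.mulVecLin (Matrix.of fun i j : Fin n =>
    if i = j then lam else if (i : ℕ) + 1 = (j : ℕ) then 1 else 0)

/-- The representation `M_n(λ)` of `Q̃`: `V₁ = V₂ = V₄ = V₅ = kⁿ`, `V₃ = kⁿ ⊕ kⁿ`,
`m_a x = (x,0)`, `m_b y = (0,y)`, `m_c (u,v) = u + v`, `m_d (u,v) = u + J_n(λ) v`. -/
def M5lam (n : ℕ) (lam : k) : Q5Rep k where
  V1 := Fin n → k
  V2 := Fin n → k
  V3 := (Fin n → k) × (Fin n → k)
  V4 := Fin n → k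
  V5 := Fin n → k
  ma := LinearMap.inl k _ _
  mb := LinearMap.inr k _ _
  mc := LinearMap.coprod LinearMap.id LinearMap.id
  md := LinearMap.coprod LinearMap.id (jordan k n lam)

/-
Let `N = J_n(0)`, the nilpotent shift, whose kernel is spanned by `e₀`. The arrows `a, b, c, d`
force every morphism `M_n(λ) → M_m(μ)` to be `(f, f, f ⊕ f, f, f)` with `f J_n(λ) = J_m(μ) f`.
A nonzero `N`-invariant subspace meets `ker N`, so it contains `e₀`; hence for an idempotent `f`
commuting with `J_n(λ)` the subspaces `range f` and `range (1 - f)` cannot both be nonzero, i.e.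
`End M_n(λ)` has no nontrivial idempotents and `M_n(λ)` is indecomposable. If `f` is injective,
`f e₀` is an eigenvector of `J_m(μ)` for the eigenvalue `λ`, so `λ - μ` is an eigenvalue of the
nilpotent `J_m(0)` and `λ = μ`; `n = m` by counting dimensions.
-/

variable {k}

theorem IsNilpotent.exists_mem_ne_zero_apply_eq_zero {R V : Type*} [Ring R] [AddCommGroup V]
    [Module R V] {N : Module.End R V} (hN : IsNilpotent N) {W : Submodule R V}
    (hW : ∀ v ∈ W, N v ∈ W) (hW0 : W ≠ ⊥) : ∃ w ∈ W, w ≠ 0 ∧ N w = 0 := by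
  obtain ⟨j, hj⟩ := hN
  obtain ⟨v, hv, hv0⟩ := W.exists_mem_ne_zero_of_ne_bot hW0
  have hjv : (N ^ j) v = 0 := by simp [hj]
  clear hj hW0
  induction j generalizing v with
  | zero => exact absurd hjv hv0
  | succ j ih =>
    by_cases hNv : N v = 0
    · exact ⟨v, hv, hv0, hNv⟩
    · exact ih (N v) (hW v hv) hNv (by rwa [← Module.End.mul_apply, ← _root_.pow_succ])

lemma jordan_apply (n : ℕ) (lam : k) (v : Fin n → k) (i : Fin n) :
    jordan k n lam v i = lam * v i + if h : (i : ℕ) + 1 < n then v ⟨i + 1, h⟩ else 0 := by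
  simp only [jordan, Matrix.mulVecLin_apply, Matrix.mulVec, dotProduct, Matrix.of_apply, ite_mul,
    one_mul, zero_mul]
  split_ifs with h
  · rw [Fintype.sum_eq_add i ⟨i + 1, h⟩ (Fin.ne_of_val_ne (by simp))]
    · simp [Fin.ext_iff]
    · intro j hj
      have : (i : ℕ) + 1 ≠ j := fun e => hj.2 (Fin.ext e.symm)
      simp [hj.1.symm, this]
  · rw [Fintype.sum_eq_single i]
    · simp
    · intro j hj
      simp [Ne.symm hj, show (i : ℕ) + 1 ≠ j by omega]

lemma jordan_eq_smul_one_add (n : ℕ) (lam : k) : jordan k n lam = lam • 1 + jordan k n 0 := by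
  ext v i
  simp [jordan_apply]

lemma jordan_zero_pow_apply (n j : ℕ) (v : Fin n → k) (i : Fin n) :
    (jordan k n 0 ^ j) v i = if h : (i : ℕ) + j < n then v ⟨i + j, h⟩ else 0 := by
  induction j generalizing v with
  | zero => simp
  | succ j ih =>
    rw [pow_succ, Module.End.mul_apply, ih]
    simp only [jordan_apply, zero_mul, zero_add]
    split_ifs <;> first | rfl | omega

lemma isNilpotent_jordan_zero (n : ℕ) : IsNilpotent (jordan k n 0) :=
  ⟨n, by ext v i; simp [jordan_zero_pow_apply]⟩

lemma jordan_apply_single_zero {n : ℕ} (hn : 1 ≤ n) (lam : k) :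
    jordan k n lam (Pi.single ⟨0, hn⟩ 1) = lam • Pi.single ⟨0, hn⟩ 1 := by
  ext i
  simp [jordan_apply, Pi.single_apply, Fin.ext_iff]

lemma eq_smul_single_zero_of_jordan_zero_eq_zero {n : ℕ} (hn : 1 ≤ n) {v : Fin n → k}
    (hv : jordan k n 0 v = 0) : v = v ⟨0, hn⟩ • Pi.single ⟨0, hn⟩ 1 := by
  ext i
  rcases i with ⟨_ | i, hi⟩
  · simp
  · have := congrFun hv ⟨i, by omega⟩
    simp_all [jordan_apply, Fin.ext_iff]

lemma single_zero_mem_of_jordan_invariant {n : ℕ} (hn : 1 ≤ n) {W : Submodule k (Fin n → k)}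
    (hW : ∀ v ∈ W, jordan k n 0 v ∈ W) (hW0 : W ≠ ⊥) : Pi.single ⟨0, hn⟩ 1 ∈ W := by
  obtain ⟨w, hw, hw0, hNw⟩ := (isNilpotent_jordan_zero n).exists_mem_ne_zero_apply_eq_zero hW hW0
  have hw' := eq_smul_single_zero_of_jordan_zero_eq_zero hn hNw
  have hc : w ⟨0, hn⟩ ≠ 0 := fun h => hw0 (by rw [hw', h, zero_smul])
  rwa [hw', Submodule.smul_mem_iff _ hc] at hw

lemma commute_jordan_zero_of_commute_jordan {n : ℕ} {lam : k} {f : Module.End k (Fin n → k)}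
    (hf : Commute f (jordan k n lam)) : Commute f (jordan k n 0) := by
  have := hf.sub_right ((Commute.one_right f).smul_right lam)
  rwa [jordan_eq_smul_one_add n lam, add_sub_cancel_left] at this

lemma apply_single_zero_of_isIdempotentElem {n : ℕ} (hn : 1 ≤ n) {lam : k}
    {p : Module.End k (Fin n → k)} (hp : IsIdempotentElem p) (hcomm : Commute p (jordan k n lam))
    (hp0 : p ≠ 0) : p (Pi.single ⟨0, hn⟩ 1) = Pi.single ⟨0, hn⟩ 1 := by
  have hN := commute_jordan_zero_of_commute_jordan hcomm
  obtain ⟨u, hu⟩ : Pi.single ⟨0, hn⟩ 1 ∈ LinearMap.range p := by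
    refine single_zero_mem_of_jordan_invariant hn ?_ (by rwa [Ne, LinearMap.range_eq_bot])
    rintro _ ⟨x, rfl⟩
    exact ⟨jordan k n 0 x, LinearMap.congr_fun hN.eq x⟩
  rw [← hu, ← Module.End.mul_apply, hp.eq]

theorem eq_zero_or_eq_one_of_isIdempotentElem_of_commute_jordan {n : ℕ} (hn : 1 ≤ n) {lam : k}
    {f : Module.End k (Fin n → k)} (hf : IsIdempotentElem f) (hcomm : Commute f (jordan k n lam)) :
    f = 0 ∨ f = 1 := by
  by_contra! h
  have h1 := apply_single_zero_of_isIdempotentElem hn hf hcomm h.1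
  have h2 := apply_single_zero_of_isIdempotentElem hn hf.one_sub
    ((Commute.one_left _).sub_left hcomm) (sub_ne_zero.mpr h.2.symm)
  rw [LinearMap.sub_apply, h1, Module.End.one_apply, sub_self, eq_comm] at h2
  simpa using congrFun h2 ⟨0, hn⟩

theorem eq_of_comp_jordan_eq {n m : ℕ} (hn : 1 ≤ n) {lam mu : k}
    {f : (Fin n → k) →ₗ[k] (Fin m → k)} (hf : Function.Injective f)
    (h : f ∘ₗ jordan k n lam = jordan k m mu ∘ₗ f) : lam = mu := by
  set w := f (Pi.single ⟨0, hn⟩ 1)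
  have hw0 : w ≠ 0 := by
    rw [Ne, map_eq_zero_iff f hf]
    simpa [funext_iff] using ⟨⟨0, hn⟩, by simp⟩
  have hJw : jordan k m mu w = lam • w := by
    rw [← LinearMap.comp_apply, ← h, LinearMap.comp_apply, jordan_apply_single_zero, map_smul]
  have hNw : jordan k m 0 w = (lam - mu) • w := by
    rw [sub_smul, ← hJw, jordan_eq_smul_one_add m mu]
    simp
  have hev : Module.End.HasEigenvalue (jordan k m 0) (lam - mu) :=
    Module.End.hasEigenvalue_of_hasEigenvector ⟨Module.End.mem_eigenspace_iff.mpr hNw, hw0⟩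
  exact sub_eq_zero.mp (hev.isNilpotent_of_isNilpotent (isNilpotent_jordan_zero m)).eq_zero

section Projection

variable {V W VA VB WA WB : Type*}
  [AddCommGroup V] [Module k V] [AddCommGroup W] [Module k W]
  [AddCommGroup VA] [Module k VA] [AddCommGroup VB] [Module k VB]
  [AddCommGroup WA] [Module k WA] [AddCommGroup WB] [Module k WB]

def LinearEquiv.fstProjection (e : V ≃ₗ[k] VA × VB) : Module.End k V :=
  e.symm.toLinearMap ∘ₗ LinearMap.prodMap LinearMap.id 0 ∘ₗ e.toLinearMap

lemma LinearEquiv.fstProjection_apply (e : V ≃ₗ[k] VA × VB) (x : V) :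
    e.fstProjection x = e.symm ((e x).1, 0) := rfl

lemma LinearEquiv.isIdempotentElem_fstProjection (e : V ≃ₗ[k] VA × VB) :
    IsIdempotentElem e.fstProjection := by
  ext x
  simp [fstProjection_apply]

lemma LinearEquiv.fstProjection_comp (eV : V ≃ₗ[k] VA × VB) (eW : W ≃ₗ[k] WA × WB)
    {m : V →ₗ[k] W} {mA : VA →ₗ[k] WA} {mB : VB →ₗ[k] WB}
    (h : eW.toLinearMap ∘ₗ m = LinearMap.prodMap mA mB ∘ₗ eV.toLinearMap) :
    eW.fstProjection ∘ₗ m = m ∘ₗ eV.fstProjection := by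
  ext x
  apply eW.injective
  have h' := fun y => LinearMap.congr_fun h y
  simp only [LinearMap.comp_apply, LinearMap.prodMap_apply, LinearEquiv.coe_coe] at h'
  simp [fstProjection_apply, h']

lemma LinearEquiv.subsingleton_of_fstProjection_eq_zero (e : V ≃ₗ[k] VA × VB)
    (h : e.fstProjection = 0) : Subsingleton VA := by
  refine subsingleton_of_forall_eq 0 fun a => ?_
  have := LinearMap.congr_fun h (e.symm (a, 0))
  simpa [fstProjection_apply] using this

lemma LinearEquiv.subsingleton_of_fstProjection_eq_one (e : V ≃ₗ[k] VA × VB)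
    (h : e.fstProjection = 1) : Subsingleton VB := by
  refine subsingleton_of_forall_eq 0 fun b => ?_
  have := LinearMap.congr_fun h (e.symm (0, b))
  simpa [fstProjection_apply, eq_comm] using this

end Projection

namespace Q5Hom

variable {M N P : Q5Rep k}

instance : Zero (Q5Hom M N) :=
  ⟨{ f1 := 0, f2 := 0, f3 := 0, f4 := 0, f5 := 0,
     comm_a := by simp, comm_b := by simp, comm_c := by simp, comm_d := by simp }⟩

protected def id (M : Q5Rep k) : Q5Hom M M :=
  { f1 := LinearMap.id, f2 := LinearMap.id, f3 := LinearMap.id, f4 := LinearMap.id,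
    f5 := LinearMap.id, comm_a := rfl, comm_b := rfl, comm_c := rfl, comm_d := rfl }

def comp (g : Q5Hom N P) (f : Q5Hom M N) : Q5Hom M P where
  f1 := g.f1 ∘ₗ f.f1
  f2 := g.f2 ∘ₗ f.f2
  f3 := g.f3 ∘ₗ f.f3
  f4 := g.f4 ∘ₗ f.f4
  f5 := g.f5 ∘ₗ f.f5
  comm_a := by rw [LinearMap.comp_assoc, f.comm_a, ← LinearMap.comp_assoc, g.comm_a]; rfl
  comm_b := by rw [LinearMap.comp_assoc, f.comm_b, ← LinearMap.comp_assoc, g.comm_b]; rfl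
  comm_c := by rw [LinearMap.comp_assoc, f.comm_c, ← LinearMap.comp_assoc, g.comm_c]; rfl
  comm_d := by rw [LinearMap.comp_assoc, f.comm_d, ← LinearMap.comp_assoc, g.comm_d]; rfl

noncomputable def fstProjection {A B : Q5Rep k} (φ : Q5Hom M (A.dsum B))
    (h1 : Function.Bijective φ.f1) (h2 : Function.Bijective φ.f2)
    (h3 : Function.Bijective φ.f3) (h4 : Function.Bijective φ.f4)
    (h5 : Function.Bijective φ.f5) : Q5Hom M M where
  f1 := (LinearEquiv.ofBijective φ.f1 h1).fstProjection
  f2 := (LinearEquiv.ofBijective φ.f2 h2).fstProjection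
  f3 := (LinearEquiv.ofBijective φ.f3 h3).fstProjection
  f4 := (LinearEquiv.ofBijective φ.f4 h4).fstProjection
  f5 := (LinearEquiv.ofBijective φ.f5 h5).fstProjection
  comm_a := LinearEquiv.fstProjection_comp _ _ φ.comm_a
  comm_b := LinearEquiv.fstProjection_comp _ _ φ.comm_b
  comm_c := LinearEquiv.fstProjection_comp _ _ φ.comm_c
  comm_d := LinearEquiv.fstProjection_comp _ _ φ.comm_d

end Q5Hom

theorem Q5Rep.indecomposable_of_idempotent {M : Q5Rep k} (hM : ¬ M.IsZeroRep)
    (hidem : ∀ e : Q5Hom M M, e.comp e = e → e = 0 ∨ e = Q5Hom.id M) : M.Indecomposable := by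
  refine ⟨hM, fun A B ⟨φ, h1, h2, h3, h4, h5⟩ => ?_⟩
  have hπ : (φ.fstProjection h1 h2 h3 h4 h5).comp (φ.fstProjection h1 h2 h3 h4 h5) =
      φ.fstProjection h1 h2 h3 h4 h5 := by
    ext1 <;> exact LinearEquiv.isIdempotentElem_fstProjection _
  rcases hidem _ hπ with h | h
  · left
    exact ⟨LinearEquiv.subsingleton_of_fstProjection_eq_zero _ (congrArg Q5Hom.f1 h),
      LinearEquiv.subsingleton_of_fstProjection_eq_zero _ (congrArg Q5Hom.f2 h),
      LinearEquiv.subsingleton_of_fstProjection_eq_zero _ (congrArg Q5Hom.f3 h),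
      LinearEquiv.subsingleton_of_fstProjection_eq_zero _ (congrArg Q5Hom.f4 h),
      LinearEquiv.subsingleton_of_fstProjection_eq_zero _ (congrArg Q5Hom.f5 h)⟩
  · right
    exact ⟨LinearEquiv.subsingleton_of_fstProjection_eq_one _ (congrArg Q5Hom.f1 h),
      LinearEquiv.subsingleton_of_fstProjection_eq_one _ (congrArg Q5Hom.f2 h),
      LinearEquiv.subsingleton_of_fstProjection_eq_one _ (congrArg Q5Hom.f3 h),
      LinearEquiv.subsingleton_of_fstProjection_eq_one _ (congrArg Q5Hom.f4 h),
      LinearEquiv.subsingleton_of_fstProjection_eq_one _ (congrArg Q5Hom.f5 h)⟩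

namespace Q5Hom

variable {M N : Q5Rep k} (g : Q5Hom M N)

lemma apply_mc_ma (x : M.V1) : g.f4 (M.mc (M.ma x)) = N.mc (N.ma (g.f1 x)) := by
  rw [← LinearMap.comp_apply g.f4, g.comm_c, LinearMap.comp_apply, ← LinearMap.comp_apply g.f3,
    g.comm_a, LinearMap.comp_apply]

lemma apply_mc_mb (x : M.V2) : g.f4 (M.mc (M.mb x)) = N.mc (N.mb (g.f2 x)) := by
  rw [← LinearMap.comp_apply g.f4, g.comm_c, LinearMap.comp_apply, ← LinearMap.comp_apply g.f3,
    g.comm_b, LinearMap.comp_apply]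

lemma apply_md_ma (x : M.V1) : g.f5 (M.md (M.ma x)) = N.md (N.ma (g.f1 x)) := by
  rw [← LinearMap.comp_apply g.f5, g.comm_d, LinearMap.comp_apply, ← LinearMap.comp_apply g.f3,
    g.comm_a, LinearMap.comp_apply]

lemma apply_md_mb (x : M.V2) : g.f5 (M.md (M.mb x)) = N.md (N.mb (g.f2 x)) := by
  rw [← LinearMap.comp_apply g.f5, g.comm_d, LinearMap.comp_apply, ← LinearMap.comp_apply g.f3,
    g.comm_b, LinearMap.comp_apply]

end Q5Hom

namespace M5lam

variable {n m : ℕ} {lam mu : k} (g : Q5Hom (M5lam k n lam) (M5lam k m mu))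

/- These are stated on the fields `V1`, `V2` rather than on `Fin n → k`: the two types agree only
up to unfolding `M5lam`, and rewriting inside the components of a morphism needs the former. -/

lemma mc_ma (x : (M5lam k n lam).V1) : (M5lam k n lam).mc ((M5lam k n lam).ma x) = x :=
  add_zero x

lemma mc_mb (x : (M5lam k n lam).V2) : (M5lam k n lam).mc ((M5lam k n lam).mb x) = x :=
  zero_add x

lemma md_ma (x : (M5lam k n lam).V1) : (M5lam k n lam).md ((M5lam k n lam).ma x) = x :=
  (congrArg (x + ·) (map_zero (jordan k n lam))).trans (add_zero x)

lemma md_mb (x : (M5lam k n lam).V2) :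
    (M5lam k n lam).md ((M5lam k n lam).mb x) = jordan k n lam x := zero_add _

lemma hom_f4_eq : g.f4 = g.f1 := LinearMap.ext fun x : (M5lam k n lam).V1 => by
  have h := g.apply_mc_ma x
  rwa [mc_ma, mc_ma] at h

lemma hom_f2_eq : g.f2 = g.f1 := LinearMap.ext fun x : (M5lam k n lam).V2 => by
  have h := g.apply_mc_mb x
  rw [mc_mb, mc_mb, hom_f4_eq] at h
  exact h.symm

lemma hom_f5_eq : g.f5 = g.f1 := LinearMap.ext fun x : (M5lam k n lam).V1 => by
  have h := g.apply_md_ma x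
  rwa [md_ma, md_ma] at h

lemma hom_f1_comp_jordan : g.f1 ∘ₗ jordan k n lam = jordan k m mu ∘ₗ g.f1 :=
  LinearMap.ext fun x : (M5lam k n lam).V2 => by
    have h := g.apply_md_mb x
    rw [md_mb, md_mb, hom_f5_eq, hom_f2_eq] at h
    exact h

lemma hom_f3_eq : g.f3 = g.f1.prodMap g.f1 := by
  apply LinearMap.prod_ext
  · exact g.comm_a.trans (LinearMap.ext fun x => Prod.ext rfl (map_zero g.f1).symm)
  · rw [← hom_f2_eq]
    exact g.comm_b.trans (LinearMap.ext fun x => Prod.ext (map_zero g.f2).symm rfl)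

theorem eq_zero_or_eq_id_of_comp_self (hn : 1 ≤ n)
    (e : Q5Hom (M5lam k n lam) (M5lam k n lam)) (he : e.comp e = e) :
    e = 0 ∨ e = Q5Hom.id _ := by
  rcases eq_zero_or_eq_one_of_isIdempotentElem_of_commute_jordan hn (congrArg Q5Hom.f1 he)
    (hom_f1_comp_jordan e) with h | h
  · left
    ext1
    · exact h
    · exact (hom_f2_eq e).trans h
    · exact (hom_f3_eq e).trans (by rw [h]; exact LinearMap.prodMap_zero)
    · exact (hom_f4_eq e).trans h
    · exact (hom_f5_eq e).trans h
  · right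
    ext1
    · exact h
    · exact (hom_f2_eq e).trans h
    · exact (hom_f3_eq e).trans (by rw [h]; exact LinearMap.prodMap_one)
    · exact (hom_f4_eq e).trans h
    · exact (hom_f5_eq e).trans h

theorem not_isZeroRep (hn : 1 ≤ n) : ¬ (M5lam k n lam).IsZeroRep := by
  have : Nonempty (Fin n) := ⟨⟨0, hn⟩⟩
  exact fun h => not_subsingleton (Fin n → k) h.1

end M5lam

/-- for `n ≥ 1` and `λ ∈ k` the representation `M_n(λ)` of `Q̃` is
indecomposable; every endomorphism of `M_n(λ)` is of the form `(f,f,f⊕f,f,f)` for a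
single `f` commuting with `J_n(λ)`; and `M_n(λ) ≅ M_m(μ)` iff `n = m` and `λ = μ`. -/
theorem stmt13 (k : Type) [Field k] (n : ℕ) (hn : 1 ≤ n) (lam : k) :
    (M5lam k n lam).Indecomposable ∧
    (∀ g : Q5Hom (M5lam k n lam) (M5lam k n lam),
      ∃ f : (Fin n → k) →ₗ[k] (Fin n → k),
        g.f1 = f ∧ g.f2 = f ∧ g.f3 = f.prodMap f ∧ g.f4 = f ∧ g.f5 = f ∧
        f ∘ₗ jordan k n lam = jordan k n lam ∘ₗ f) ∧
    (∀ (m : ℕ), 1 ≤ m → ∀ mu : k,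
      (Q5Iso (M5lam k n lam) (M5lam k m mu) ↔ n = m ∧ lam = mu)) := by
  refine ⟨Q5Rep.indecomposable_of_idempotent (M5lam.not_isZeroRep hn)
    (M5lam.eq_zero_or_eq_id_of_comp_self hn), fun g => ⟨g.f1, rfl, M5lam.hom_f2_eq g,
    M5lam.hom_f3_eq g, M5lam.hom_f4_eq g, M5lam.hom_f5_eq g, M5lam.hom_f1_comp_jordan g⟩,
    fun m _ mu => ⟨?_, ?_⟩⟩
  · rintro ⟨g, h1, -⟩
    have hdim : Module.finrank k (Fin n → k) = Module.finrank k (Fin m → k) :=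
      (LinearEquiv.ofBijective g.f1 h1).finrank_eq
    have hnm : n = m := by simpa using hdim
    exact ⟨hnm, eq_of_comp_jordan_eq hn h1.1 (M5lam.hom_f1_comp_jordan g)⟩
  · rintro ⟨rfl, rfl⟩
    exact ⟨Q5Hom.id _, Function.bijective_id, Function.bijective_id, Function.bijective_id,
      Function.bijective_id, Function.bijective_id⟩
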